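/- arXiv:2405.03227 — 3 statements merged into one kernel-verified Lean document; each statement's English description precedes it below -/
import Mathlib

section
/- Let k ≥ 1 and let z : ℕ → ℝ satisfy z(n+k) = z(n)/(A(n) + B(n)·z(n)) for all n, where all z(n) ≠ 0 and all denominators are nonzero. Then for all n ≥ 0 and 0 ≤ j < k, z(k·n + j) = z(j) / ( (∏_{i=0}^{n-1} A(k·i + j)) + z(j) · ∑_{l=0}^{n-1} B(k·l + j) · ∏_{i=l+1}^{n-1} A(k·i + j) ). -/
/-!
The substitution `S n = (z n)⁻¹` turns the recurrence into the linear one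
`S (n + k) = A n * S n + B n`, which along each residue class `k * m + j` is a first-order
linear recurrence with the usual closed form; inverting back gives the formula for `z`.
-/

open Finset

theorem eq_prod_mul_add_sum_of_linear_recurrence {R : Type*} [CommSemiring R] (x a b : ℕ → R)
    (h : ∀ n, x (n + 1) = a n * x n + b n) (n : ℕ) :
    x n = (∏ i ∈ range n, a i) * x 0 + ∑ l ∈ range n, b l * ∏ i ∈ Ico (l + 1) n, a i := by
  induction n with
  | zero => simp
  | succ n ih =>
    have hsum : ∑ l ∈ range n, b l * ∏ i ∈ Ico (l + 1) (n + 1), a i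
        = a n * ∑ l ∈ range n, b l * ∏ i ∈ Ico (l + 1) n, a i := by
      rw [mul_sum]
      refine sum_congr rfl fun l hl => ?_
      rw [prod_Ico_succ_top (mem_range.mp hl)]
      ring
    rw [h, ih, sum_range_succ, hsum, prod_range_succ, Ico_self, prod_empty]
    ring

theorem inv_eq_mul_inv_add_of_eq_div {K : Type*} [Field K] {x y a b : K}
    (hx : x ≠ 0) (hy : y = x / (a + b * x)) : y⁻¹ = a * x⁻¹ + b := by
  rw [hy, inv_div]
  field_simp

theorem stmt_2_general (k : ℕ) (A B z : ℕ → ℝ)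
    (hrec : ∀ n, z (n + k) = z n / (A n + B n * z n))
    (hz : ∀ n, z n ≠ 0) :
    ∀ n, ∀ j < k, z (k * n + j) =
      z j / ((∏ i ∈ Finset.range n, A (k * i + j)) +
        z j * ∑ l ∈ Finset.range n, B (k * l + j) * ∏ i ∈ Finset.Ico (l + 1) n, A (k * i + j)) := by
  intro n j _
  have hinv : ∀ m, (z (k * (m + 1) + j))⁻¹ = A (k * m + j) * (z (k * m + j))⁻¹ + B (k * m + j) :=
    fun m => by
      rw [show k * (m + 1) + j = k * m + j + k by ring]
      exact inv_eq_mul_inv_add_of_eq_div (hz _) (hrec _)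
  have hclosed := eq_prod_mul_add_sum_of_linear_recurrence
    (fun m => (z (k * m + j))⁻¹) (fun m => A (k * m + j)) (fun m => B (k * m + j)) hinv n
  simp only [mul_zero, zero_add] at hclosed
  rw [← inv_inv (z (k * n + j)), hclosed]
  have hzj := hz j
  field_simp

theorem stmt_2 (k : ℕ) (hk : 1 ≤ k) (A B z : ℕ → ℝ)
    (hrec : ∀ n, z (n + k) = z n / (A n + B n * z n))
    (hz : ∀ n, z n ≠ 0)
    (hden : ∀ n, A n + B n * z n ≠ 0) :
    ∀ n, ∀ j < k, z (k * n + j) =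
      z j / ((∏ i ∈ Finset.range n, A (k * i + j)) +
        z j * ∑ l ∈ Finset.range n, B (k * l + j) * ∏ i ∈ Finset.Ico (l + 1) n, A (k * i + j)) :=
  stmt_2_general k A B z hrec hz
end

section
/- Let |A| > 1, B ≠ 0, k ≥ 1, and let z : ℕ → ℝ satisfy z(n+k) = z(n)/(A + B·z(n)) with all denominators nonzero and all z(n) ≠ 0. If for each j < k, A^n + z(j)·B·(1 - A^n)/(1 - A) ≠ 0 for all n, then z(n) → 0 as n → ∞ whenever z(j) ≠ (1-A)/B for all j < k. In particular, using the closed form, z(k·n+j) = z(j)/(A^n + z(j)·B·(1-A^n)/(1-A)) tends to 0 as n → ∞ when z(j) ≠ (1-A)/B. -/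
/-!
Along each residue class `n ≡ j (mod k)` the recurrence is a one-step Beverton–Holt map, whose
iterates are `z (k n + j) = z j / D n` with `D 0 = 1`, `D (n + 1) = A D n + B z j`.
Solving this linear recurrence gives `D n = A ^ n (1 - c) + c` with `c = z j B / (1 - A)`,
and `c ≠ 1` means `z j B ≠ 1 - A`, which follows from `z j ≠ (1 - A) / B`. Hence `|D n|` grows
like `|A| ^ n`, every subsequence `n ↦ z (k n + j)` tends to `0`, and so does `z`.
-/

open Filter Topology

theorem tendsto_of_tendsto_mul_add {α : Type*} {f : ℕ → α} {l : Filter α} {k : ℕ} (hk : 0 < k)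
    (h : ∀ j < k, Tendsto (fun n => f (k * n + j)) atTop l) : Tendsto f atTop l := by
  intro s hs
  have hev : ∀ᶠ n in atTop, ∀ j : Fin k, f (k * n + j) ∈ s :=
    eventually_all.2 fun j => h j j.isLt hs
  obtain ⟨N, hN⟩ := eventually_atTop.1 hev
  refine mem_map.2 (mem_atTop_sets.2 ⟨k * N, fun m hm => ?_⟩)
  have hNm : N ≤ m / k := (Nat.le_div_iff_mul_le hk).2 (by rwa [mul_comm])
  simpa only [Set.mem_preimage, Nat.div_add_mod] using hN (m / k) hNm ⟨m % k, Nat.mod_lt m hk⟩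

section BevertonHolt

variable {K : Type*} [Field K]

def bevertonHoltDenom (A B x : K) (n : ℕ) : K := A ^ n + x * B * (1 - A ^ n) / (1 - A)

theorem bevertonHoltDenom_succ {A : K} (hA : A ≠ 1) (B x : K) (n : ℕ) :
    bevertonHoltDenom A B x (n + 1) = A * bevertonHoltDenom A B x n + B * x := by
  have : 1 - A ≠ 0 := sub_ne_zero.2 hA.symm
  unfold bevertonHoltDenom
  field_simp
  ring

theorem bevertonHoltDenom_eq_pow_mul {A : K} (hA₀ : A ≠ 0) (hA : A ≠ 1) (B x : K) (n : ℕ) :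
    bevertonHoltDenom A B x n = A ^ n * ((1 - x * B / (1 - A)) + x * B / (1 - A) * (A⁻¹) ^ n) := by
  have : 1 - A ≠ 0 := sub_ne_zero.2 hA.symm
  unfold bevertonHoltDenom
  rw [inv_pow]
  field_simp
  ring

theorem eq_div_bevertonHoltDenom {A B : K} (hA : A ≠ 1) {w : ℕ → K}
    (hrec : ∀ n, w (n + 1) = w n / (A + B * w n))
    (hD : ∀ n, bevertonHoltDenom A B (w 0) n ≠ 0) (n : ℕ) :
    w n = w 0 / bevertonHoltDenom A B (w 0) n := by
  induction n with
  | zero => simp [bevertonHoltDenom]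
  | succ n ih =>
    have hDn := hD n
    rw [hrec, ih, bevertonHoltDenom_succ hA]
    field_simp

end BevertonHolt

theorem tendsto_div_bevertonHoltDenom {𝕜 : Type*} [NormedField 𝕜] {A B x : 𝕜} (hA : 1 < ‖A‖)
    (hx : x * B ≠ 1 - A) :
    Tendsto (fun n => x / bevertonHoltDenom A B x n) atTop (𝓝 0) := by
  have hA₀ : A ≠ 0 := norm_pos_iff.1 (one_pos.trans hA)
  have hA₁ : A ≠ 1 := by rintro rfl; simp at hA
  have hc : 1 - x * B / (1 - A) ≠ 0 := by
    rw [sub_ne_zero, ne_comm, ne_eq, div_eq_one_iff_eq (sub_ne_zero.2 hA₁.symm)]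
    exact hx
  have hpow : Tendsto (fun n => A⁻¹ ^ n) atTop (𝓝 0) :=
    tendsto_pow_atTop_nhds_zero_of_norm_lt_one (by rw [norm_inv]; exact inv_lt_one_of_one_lt₀ hA)
  have hlim : Tendsto (fun n => x * A⁻¹ ^ n / ((1 - x * B / (1 - A)) + x * B / (1 - A) * A⁻¹ ^ n))
      atTop (𝓝 (x * 0 / ((1 - x * B / (1 - A)) + x * B / (1 - A) * 0))) :=
    (hpow.const_mul x).div (tendsto_const_nhds.add (hpow.const_mul _)) (by simpa using hc)
  simp only [mul_zero, add_zero, zero_div] at hlim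
  refine hlim.congr fun n => ?_
  rw [bevertonHoltDenom_eq_pow_mul hA₀ hA₁, ← div_div, div_eq_mul_inv x, inv_pow]

theorem stmt_11_general (k : ℕ) (hk : 1 ≤ k) (A B : ℝ) (hA : 1 < |A|)
    (z : ℕ → ℝ)
    (hrec : ∀ n, z (n + k) = z n / (A + B * z n))
    (hden2 : ∀ j < k, ∀ n : ℕ, A ^ n + z j * B * (1 - A ^ n) / (1 - A) ≠ 0)
    (hne : ∀ j < k, z j ≠ (1 - A) / B) :
    Filter.Tendsto z Filter.atTop (nhds 0) ∧
    ∀ j < k, Filter.Tendsto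
      (fun n : ℕ => z j / (A ^ n + z j * B * (1 - A ^ n) / (1 - A)))
      Filter.atTop (nhds 0) := by
  have hA₁ : A ≠ 1 := by rintro rfl; norm_num at hA
  have hlim (j : ℕ) (hj : j < k) :
      Tendsto (fun n => z j / bevertonHoltDenom A B (z j) n) atTop (𝓝 0) :=
    tendsto_div_bevertonHoltDenom (by rwa [Real.norm_eq_abs]) fun h => hne j hj <|
      eq_div_of_mul_eq (right_ne_zero_of_mul (h ▸ sub_ne_zero.2 hA₁.symm)) h
  refine ⟨tendsto_of_tendsto_mul_add hk fun j hj => ?_, hlim⟩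
  have hclosed := eq_div_bevertonHoltDenom (w := fun n => z (k * n + j)) hA₁
    (fun n => by rw [mul_add_one, add_right_comm, hrec])
    (by simpa [bevertonHoltDenom] using hden2 j hj)
  simpa only [hclosed, mul_zero, zero_add] using hlim j hj

theorem stmt_11 (k : ℕ) (hk : 1 ≤ k) (A B : ℝ) (hA : 1 < |A|) (hB : B ≠ 0)
    (z : ℕ → ℝ)
    (hrec : ∀ n, z (n + k) = z n / (A + B * z n))
    (hden : ∀ n, A + B * z n ≠ 0)
    (hz : ∀ n, z n ≠ 0)
    (hden2 : ∀ j < k, ∀ n : ℕ, A ^ n + z j * B * (1 - A ^ n) / (1 - A) ≠ 0)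
    (hne : ∀ j < k, z j ≠ (1 - A) / B) :
    Filter.Tendsto z Filter.atTop (nhds 0) ∧
    ∀ j < k, Filter.Tendsto
      (fun n : ℕ => z j / (A ^ n + z j * B * (1 - A ^ n) / (1 - A)))
      Filter.atTop (nhds 0) :=
  stmt_11_general k hk A B hA z hrec hden2 hne
end

section
/- Let ζ(n, z) = β(n)·z² with β : ℕ → ℝ satisfying β(n+k) = A(n)·β(n) and β(n) ≠ 0 for all n, and let 𝒜(n, z) = z/(A(n) + B(n)·z). Then for all n and all z with A(n) + B(n)·z ≠ 0: ζ(n+k, 𝒜(n,z)) - (∂𝒜/∂z)(n,z) · ζ(n, z) = 0, i.e., β(n+k)·(z/(A(n)+B(n)z))² = (A(n)/(A(n)+B(n)z)²)·β(n)·z². -/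
theorem stmt_19_general (k : ℕ) (A B β : ℕ → ℝ)
    (hβrec : ∀ n, β (n + k) = A n * β n) :
    ∀ n, ∀ z : ℝ, A n + B n * z ≠ 0 →
      β (n + k) * (z / (A n + B n * z)) ^ 2 =
        (A n / (A n + B n * z) ^ 2) * (β n * z ^ 2) := by
  intro n z _
  rw [hβrec, div_pow]
  ring

theorem stmt_19 (k : ℕ) (hk : 1 ≤ k) (A B β : ℕ → ℝ)
    (hβrec : ∀ n, β (n + k) = A n * β n) (hβ : ∀ n, β n ≠ 0) :
    ∀ n, ∀ z : ℝ, A n + B n * z ≠ 0 →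
      β (n + k) * (z / (A n + B n * z)) ^ 2 =
        (A n / (A n + B n * z) ^ 2) * (β n * z ^ 2) :=
  stmt_19_general k A B β hβrec
end
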